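/- On the singular set {|α|² = |β|²}, one has f' × f_z̄ = f' × f'_z̄ = f_z̄ × f'_z̄ = 0 for f = AA*, and analogously g' × g_z̄ = g' × g'_z̄ = g_z̄ × g'_z̄ = 0 for g = Ae₃A*. -/
import Mathlib


open Matrix Complex ComplexConjugate

def e3 : Matrix (Fin 2) (Fin 2) ℂ := !![1, 0; 0, -1]

/-- `X × Y = (i/2)(X p⁻¹ Y - Y p⁻¹ X)` at base point `p`. -/
noncomputable def cross (p X Y : Matrix (Fin 2) (Fin 2) ℂ) :
    Matrix (Fin 2) (Fin 2) ℂ :=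
  (Complex.I / 2) • (X * p⁻¹ * Y - Y * p⁻¹ * X)

lemma conj_cross (A P X Y : Matrix (Fin 2) (Fin 2) ℂ) (hA : IsUnit A.det) :
    cross (A * P * Aᴴ) (A * X * Aᴴ) (A * Y * Aᴴ) = A * cross P X Y * Aᴴ := by
  have hAH : IsUnit (Aᴴ).det := by
    rw [Matrix.det_conjTranspose]; exact hA.star
  have h1 : Aᴴ * (Aᴴ)⁻¹ = 1 := Matrix.mul_nonsing_inv _ hAH
  have h2 : A⁻¹ * A = 1 := Matrix.nonsing_inv_mul _ hA
  unfold cross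
  rw [Matrix.mul_inv_rev, Matrix.mul_inv_rev]
  have h3 : ∀ U V : Matrix (Fin 2) (Fin 2) ℂ,
      A * U * Aᴴ * (Aᴴ⁻¹ * (P⁻¹ * A⁻¹)) * (A * V * Aᴴ) = A * (U * P⁻¹ * V) * Aᴴ := by
    intro U V
    calc A * U * Aᴴ * (Aᴴ⁻¹ * (P⁻¹ * A⁻¹)) * (A * V * Aᴴ)
        = A * U * ((Aᴴ * Aᴴ⁻¹) * (P⁻¹ * ((A⁻¹ * A) * (V * Aᴴ)))) := by
          simp only [Matrix.mul_assoc]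
      _ = A * (U * P⁻¹ * V) * Aᴴ := by
          rw [h1, h2, Matrix.one_mul, Matrix.one_mul]; simp only [Matrix.mul_assoc]
  rw [mul_smul_comm, smul_mul_assoc, Matrix.mul_sub, Matrix.sub_mul, h3, h3]

lemma e3_inv : e3⁻¹ = e3 := by
  apply Matrix.inv_eq_right_inv
  ext i j
  fin_cases i <;> fin_cases j <;>
    simp [e3, Matrix.mul_fin_two, Matrix.one_fin_two]

lemma cross_comm_zero (P X Y : Matrix (Fin 2) (Fin 2) ℂ)
    (h : X * P⁻¹ * Y = Y * P⁻¹ * X) : cross P X Y = 0 := by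
  unfold cross
  rw [h, sub_self, smul_zero]

/-- On the singular set `{|α|² = |β|²}` (`det A = 1`):
`f' × f_z̄ = f' × f'_z̄ = f_z̄ × f'_z̄ = 0` at base point `f = AAᴴ`, and
`g' × g_z̄ = g' × g'_z̄ = g_z̄ × g'_z̄ = 0` at base point `g = Ae₃Aᴴ`, where
`f' = ADAᴴ`, `f_z̄ = ADᴴAᴴ`, `f'_z̄ = A·diag(|α|²,|β|²)·Aᴴ`, `g' = ADe₃Aᴴ`,
`g_z̄ = Ae₃DᴴAᴴ`, `g'_z̄ = A·diag(-|α|²,|β|²)·Aᴴ` with `D = [[0,a],[b,0]]`. -/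
theorem cross_vanishing_on_singular_set (A : Matrix (Fin 2) (Fin 2) ℂ)
    (hA : A.det = 1) (a b : ℂ) (hsing : a * conj a = b * conj b) :
    cross (A * Aᴴ) (A * !![0, a; b, 0] * Aᴴ) (A * (!![0, a; b, 0])ᴴ * Aᴴ) = 0 ∧
    cross (A * Aᴴ) (A * !![0, a; b, 0] * Aᴴ)
      (A * !![a * conj a, 0; 0, b * conj b] * Aᴴ) = 0 ∧
    cross (A * Aᴴ) (A * (!![0, a; b, 0])ᴴ * Aᴴ)
      (A * !![a * conj a, 0; 0, b * conj b] * Aᴴ) = 0 ∧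
    cross (A * e3 * Aᴴ) (A * !![0, a; b, 0] * e3 * Aᴴ)
      (A * e3 * (!![0, a; b, 0])ᴴ * Aᴴ) = 0 ∧
    cross (A * e3 * Aᴴ) (A * !![0, a; b, 0] * e3 * Aᴴ)
      (A * !![-(a * conj a), 0; 0, b * conj b] * Aᴴ) = 0 ∧
    cross (A * e3 * Aᴴ) (A * e3 * (!![0, a; b, 0])ᴴ * Aᴴ)
      (A * !![-(a * conj a), 0; 0, b * conj b] * Aᴴ) = 0 := by
  have hu : IsUnit A.det := by rw [hA]; exact isUnit_one
  have hA1 : A * Aᴴ = A * 1 * Aᴴ := by rw [Matrix.mul_one]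
  have key : ∀ P X Y : Matrix (Fin 2) (Fin 2) ℂ, X * P⁻¹ * Y = Y * P⁻¹ * X →
      cross (A * P * Aᴴ) (A * X * Aᴴ) (A * Y * Aᴴ) = 0 := by
    intro P X Y h
    rw [conj_cross A P X Y hu, cross_comm_zero P X Y h, Matrix.mul_zero,
      Matrix.zero_mul]
  have hDH : (!![0, a; b, 0])ᴴ = !![0, conj b; conj a, 0] := by
    ext i j; fin_cases i <;> fin_cases j <;>
      simp [Matrix.conjTranspose_apply]
  refine ⟨?_, ?_, ?_, ?_, ?_, ?_⟩
  · rw [hA1]; apply key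
    rw [hDH]
    ext i j; fin_cases i <;> fin_cases j <;>
      simp [Matrix.mul_fin_two] <;>
      first | ring1 | linear_combination hsing | linear_combination -hsing
  · rw [hA1]; apply key
    ext i j; fin_cases i <;> fin_cases j <;>
      simp [Matrix.mul_fin_two] <;>
      first | ring1 | linear_combination hsing | linear_combination -hsing |
        linear_combination a * hsing | linear_combination b * hsing |
        linear_combination -a * hsing | linear_combination -b * hsing
  · rw [hA1]; apply key
    rw [hDH]
    ext i j; fin_cases i <;> fin_cases j <;>
      simp [Matrix.mul_fin_two] <;>
      first | ring1 | linear_combination hsing | linear_combination -hsing |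
        linear_combination conj a * hsing | linear_combination conj b * hsing |
        linear_combination -conj a * hsing | linear_combination -conj b * hsing
  · rw [show A * !![0, a; b, 0] * e3 = A * (!![0, a; b, 0] * e3) from Matrix.mul_assoc _ _ _,
      show A * e3 * (!![0, a; b, 0])ᴴ = A * (e3 * (!![0, a; b, 0])ᴴ) from Matrix.mul_assoc _ _ _]
    apply key
    rw [hDH, e3_inv]
    ext i j; fin_cases i <;> fin_cases j <;>
      simp [e3, Matrix.mul_fin_two] <;>
      first | ring1 | linear_combination hsing | linear_combination -hsing
  · rw [show A * !![0, a; b, 0] * e3 = A * (!![0, a; b, 0] * e3) from Matrix.mul_assoc _ _ _]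
    apply key
    rw [e3_inv]
    ext i j; fin_cases i <;> fin_cases j <;>
      simp [e3, Matrix.mul_fin_two] <;>
      first | ring1 | linear_combination hsing | linear_combination -hsing |
        linear_combination a * hsing | linear_combination b * hsing |
        linear_combination -a * hsing | linear_combination -b * hsing
  · rw [show A * e3 * (!![0, a; b, 0])ᴴ = A * (e3 * (!![0, a; b, 0])ᴴ) from Matrix.mul_assoc _ _ _]
    apply key
    rw [hDH, e3_inv]
    ext i j; fin_cases i <;> fin_cases j <;>
      simp [e3, Matrix.mul_fin_two] <;>
      first | ring1 | linear_combination hsing | linear_combination -hsing |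
        linear_combination conj a * hsing | linear_combination conj b * hsing |
        linear_combination -conj a * hsing | linear_combination -conj b * hsing
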